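/- arXiv:1611.10186 — 3 statements merged into one kernel-verified Lean document; each statement's English description precedes it below -/
import Mathlib

section
/- Let p be an odd prime, t ≥ 1 an integer, ℓ ≥ 1 an integer, and R, D integers with gcd(p, D) = 1 and p^t ∣ R. Then p^{-t} ∑_{a ∈ (ℤ/p^t ℤ)^*} e(aR/p^t) (∑_{r mod p^t} e(ar²/p^t))^{ℓ-1} (∑_{r mod p^t} e(aDr²/p^t)) equals (1−p^{-1}) p^{ℓt/2} if t is even; if t is odd it equals 0 when ℓ is odd, and equals (1−p^{-1}) p^{ℓt/2} (((-1)^{ℓ/2} D)/p), where ((-1)^{ℓ/2} D)/p denotes the Legendre symbol, when ℓ is even. -/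
open Complex Finset

noncomputable def e (x : ℝ) : ℂ := Complex.exp (2 * Real.pi * Complex.I * x)

lemma e_add (x y : ℝ) : e (x + y) = e x * e y := by
  simp only [e, Complex.ofReal_add, mul_add, Complex.exp_add]

lemma e_int (k : ℤ) : e k = 1 := by
  rw [e]; push_cast
  rw [mul_comm]
  exact Complex.exp_int_mul_two_pi_mul_I k

lemma e_zero : e 0 = 1 := by simpa using e_int 0

lemma e_pow (x : ℝ) (k : ℕ) : e x ^ k = e (k * x) := by
  induction k with
  | zero => simp [e_zero]
  | succ n ih => rw [pow_succ, ih, ← e_add]; congr 1; push_cast; ring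

lemma e_eq_one_iff {x : ℝ} : e x = 1 ↔ ∃ k : ℤ, x = k := by
  rw [e, Complex.exp_eq_one_iff]
  constructor
  · rintro ⟨k, hk⟩
    refine ⟨k, ?_⟩
    have h2 : (2 * (Real.pi:ℂ) * Complex.I) ≠ 0 := by
      simp [Real.pi_ne_zero, Complex.I_ne_zero]
    have : (x : ℂ) = k := by
      apply mul_left_cancel₀ h2
      rw [hk]; ring
    exact_mod_cast this
  · rintro ⟨k, rfl⟩
    exact ⟨k, by push_cast; ring⟩

lemma e_congr {n : ℕ} (hn : 0 < n) {x y : ℤ} (h : (n : ℤ) ∣ x - y) :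
    e ((x : ℝ) / n) = e ((y : ℝ) / n) := by
  obtain ⟨k, hk⟩ := h
  have hx : (x : ℝ) = y + n * k := by
    have : (x : ℝ) - y = n * k := by exact_mod_cast congrArg (Int.cast : ℤ → ℝ) hk
    linarith
  have hn' : (n : ℝ) ≠ 0 := by positivity
  have : (x : ℝ) / n = (y : ℝ) / n + k := by rw [hx]; field_simp
  rw [this]
  rw [e_add, e_int, mul_one]
lemma sum_e_geo (n : ℕ) (hn : 0 < n) (w : ℤ) :
    ∑ v ∈ Finset.range n, e (((w * v : ℤ) : ℝ) / n) = if (n : ℤ) ∣ w then (n : ℂ) else 0 := by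
  have hterm : ∀ v : ℕ, e (((w * v : ℤ) : ℝ) / n) = e ((w : ℝ) / n) ^ v := by
    intro v
    rw [e_pow]
    congr 1
    push_cast
    ring
  simp only [hterm]
  split_ifs with h
  · obtain ⟨k, rfl⟩ := h
    have : e ((((n : ℤ) * k : ℤ) : ℝ) / n) = 1 := by
      have : (((n : ℤ) * k : ℤ) : ℝ) / n = (k : ℝ) := by
        have hn' : (n : ℝ) ≠ 0 := by positivity
        push_cast
        field_simp
      rw [this]; exact e_int k
    simp only [this, one_pow, Finset.sum_const, Finset.card_range, nsmul_eq_mul, mul_one]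
  · have hz : e ((w : ℝ) / n) ≠ 1 := by
      intro hone
      obtain ⟨k, hk⟩ := e_eq_one_iff.mp hone
      apply h
      refine ⟨k, ?_⟩
      have hn' : (n : ℝ) ≠ 0 := by positivity
      have : (w : ℝ) = n * k := by
        field_simp at hk
        linarith [hk]
      exact_mod_cast this
    rw [geom_sum_eq hz]
    have : e ((w : ℝ) / n) ^ n = 1 := by
      rw [e_pow]
      have : (n : ℝ) * ((w : ℝ) / n) = (w : ℝ) := by
        field_simp
      rw [this]; exact e_int w
    rw [this, sub_self, zero_div]
noncomputable def Sr (n : ℕ) (c : ℤ) : ℂ :=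
  ∑ r ∈ Finset.range n, e (((c * (r : ℤ) ^ 2 : ℤ) : ℝ) / n)

lemma e_eq_char (n : ℕ) [NeZero n] (x : ℤ) :
    e ((x : ℝ) / n) = ZMod.stdAddChar (N := n) (x : ZMod n) := by
  rw [ZMod.stdAddChar_coe, e]
  push_cast
  ring_nf

lemma sum_range_eq_sum_zmod (n : ℕ) [NeZero n] (f : ℕ → ℂ) :
    ∑ x : ZMod n, f (ZMod.val x) = ∑ r ∈ Finset.range n, f r := by
  apply Finset.sum_bij' (fun (x : ZMod n) _ => x.val) (fun (r : ℕ) _ => (r : ZMod n))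
  · intro a _; exact Finset.mem_range.mpr (ZMod.val_lt a)
  · intro a _; exact Finset.mem_univ _
  · intro a _; exact ZMod.natCast_zmod_val a
  · intro a ha; exact ZMod.val_natCast_of_lt (Finset.mem_range.mp ha)
  · intro a _; rfl

lemma Sr_eq_zmod_sum (n : ℕ) [NeZero n] (c : ℤ) :
    Sr n c = ∑ x : ZMod n, ZMod.stdAddChar (N := n) ((c : ZMod n) * x ^ 2) := by
  rw [Sr, ← sum_range_eq_sum_zmod n]
  apply Finset.sum_congr rfl
  intro x _
  rw [e_eq_char]
  congr 1
  push_cast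
  rw [ZMod.natCast_zmod_val]
lemma sum_range_mul (m k : ℕ) (f : ℕ → ℂ) :
    ∑ r ∈ Finset.range (m * k), f r
      = ∑ u ∈ Finset.range m, ∑ v ∈ Finset.range k, f (u + m * v) := by
  rw [← Finset.sum_product']
  apply Finset.sum_bij' (fun (r : ℕ) _ => ((r % m, r / m) : ℕ × ℕ))
    (fun (uv : ℕ × ℕ) _ => uv.1 + m * uv.2)
  · intro r hr
    have hr' := Finset.mem_range.mp hr
    have hm : 0 < m := by
      rcases Nat.eq_zero_or_pos m with h | h
      · subst h; simp at hr'
      · exact h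
    refine Finset.mem_product.mpr ⟨Finset.mem_range.mpr (Nat.mod_lt _ hm), ?_⟩
    exact Finset.mem_range.mpr ((Nat.div_lt_iff_lt_mul hm).mpr (by rwa [mul_comm] at hr'))
  · intro uv huv
    obtain ⟨h1, h2⟩ := Finset.mem_product.mp huv
    have h1 := Finset.mem_range.mp h1
    have h2 := Finset.mem_range.mp h2
    refine Finset.mem_range.mpr ?_
    calc uv.1 + m * uv.2 < m + m * uv.2 := by omega
    _ = m * (uv.2 + 1) := by ring
    _ ≤ m * k := Nat.mul_le_mul_left m (by omega)
  · intro r _; exact (Nat.mod_add_div r m)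
  · intro uv huv
    obtain ⟨h1, _⟩ := Finset.mem_product.mp huv
    have h1 := Finset.mem_range.mp h1
    have hmod : (uv.1 + m * uv.2) % m = uv.1 := by
      rw [Nat.add_mul_mod_self_left, Nat.mod_eq_of_lt h1]
    have hdiv : (uv.1 + m * uv.2) / m = uv.2 := by
      have hm : 0 < m := by omega
      rw [Nat.add_mul_div_left _ _ hm, Nat.div_eq_of_lt h1, zero_add]
    simp [hmod, hdiv]
  · intro r _; rw [Nat.mod_add_div r m]
lemma Sr_rec (p : ℕ) (hp : p.Prime) (hodd : Odd p) (s : ℕ) (c : ℤ) (hc : ¬ (p : ℤ) ∣ c) :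
    Sr (p ^ (s + 2)) c = p * Sr (p ^ s) c := by
  have hp0 : 0 < p := hp.pos
  have hppos : (0:ℝ) < (p:ℝ) := by exact_mod_cast hp0
  set m := p ^ (s + 1) with hm
  set n := p ^ (s + 2) with hn
  have hnm : n = m * p := by rw [hn, hm, pow_succ]
  -- step 1 : reindex
  rw [Sr, hnm, sum_range_mul]
  -- step 2 : split each term
  have hterm : ∀ u v : ℕ, u < m → v < p →
      e (((c * ((u + m * v : ℕ) : ℤ) ^ 2 : ℤ) : ℝ) / (m * p : ℕ))
        = e (((c * (u : ℤ) ^ 2 : ℤ) : ℝ) / n) * e ((((2 * c * u) * v : ℤ) : ℝ) / p) := by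
    intro u v _ _
    have h1 : e (((c * ((u + m * v : ℕ) : ℤ) ^ 2 : ℤ) : ℝ) / (m * p : ℕ))
        = e (((c * (u:ℤ) ^ 2 + 2 * c * u * m * v : ℤ) : ℝ) / n) := by
      rw [← hnm]
      apply e_congr (by positivity)
      have hdvd : (n : ℤ) ∣ ((m : ℤ) * m) := by
        have : ((m : ℤ)) * m = (p:ℤ) ^ (2 * s + 2) := by
          push_cast [hm]; rw [← pow_add]; ring_nf
        rw [this, hn]
        push_cast
        exact pow_dvd_pow _ (by omega)
      have : (c * ((u + m * v : ℕ) : ℤ) ^ 2) - (c * (u:ℤ) ^ 2 + 2 * c * u * m * v)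
          = (m * m) * (c * v ^ 2) := by push_cast; ring
      rw [this]
      exact hdvd.mul_right _
    rw [h1]
    have h2 : ((c * (u:ℤ) ^ 2 + 2 * c * u * m * v : ℤ) : ℝ) / n
        = ((c * (u:ℤ) ^ 2 : ℤ) : ℝ) / n + (((2 * c * u) * v : ℤ) : ℝ) / p := by
      have hmn : (n : ℝ) = (m : ℝ) * p := by exact_mod_cast congrArg (Nat.cast : ℕ → ℝ) hnm
      have hm0 : (0:ℝ) < (m:ℝ) := by positivity
      field_simp [hmn]
      push_cast
      rw [hmn]
      ring
    rw [h2, e_add]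
  rw [Finset.sum_congr rfl fun u hu => Finset.sum_congr rfl fun v hv =>
    hterm u v (Finset.mem_range.mp hu) (Finset.mem_range.mp hv)]
  -- step 3 : inner geometric sum
  have hinner : ∀ u : ℕ,
      ∑ v ∈ Finset.range p, e (((c * (u:ℤ) ^ 2 : ℤ) : ℝ) / n) * e ((((2 * c * u) * v : ℤ) : ℝ) / p)
        = e (((c * (u:ℤ) ^ 2 : ℤ) : ℝ) / n) * (if (p:ℤ) ∣ 2 * c * u then (p:ℂ) else 0) := by
    intro u
    rw [← Finset.mul_sum, sum_e_geo p hp0]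
  rw [Finset.sum_congr rfl fun u _ => hinner u]
  -- step 4 : divisibility condition
  have hp2 : ¬ (p:ℤ) ∣ 2 := by
    intro h
    have h2 : p ∣ 2 := by exact_mod_cast h
    have := (Nat.prime_dvd_prime_iff_eq hp Nat.prime_two).mp h2
    subst this
    exact absurd hodd (by decide)
  have hcond : ∀ u : ℕ, ((p:ℤ) ∣ 2 * c * u) ↔ (p ∣ u) := by
    intro u
    constructor
    · intro h
      rcases ((Int.prime_iff_natAbs_prime.mpr (by simpa using hp)).dvd_mul.mp h) with h' | h'
      · rcases (Int.prime_iff_natAbs_prime.mpr (by simpa using hp)).dvd_mul.mp h' with h'' | h''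
        · exact absurd h'' hp2
        · exact absurd h'' hc
      · exact_mod_cast h'
    · intro h
      exact Dvd.dvd.mul_left (by exact_mod_cast h) _
  -- step 5 : sum over multiples of p
  have hsum : ∀ u : ℕ,
      e (((c * (u:ℤ) ^ 2 : ℤ) : ℝ) / n) * (if (p:ℤ) ∣ 2 * c * u then (p:ℂ) else 0)
        = if p ∣ u then (p : ℂ) * e (((c * (u:ℤ) ^ 2 : ℤ) : ℝ) / n) else 0 := by
    intro u
    by_cases h : p ∣ u
    · rw [if_pos ((hcond u).mpr h), if_pos h]; ring
    · rw [if_neg (fun h' => h ((hcond u).mp h')), if_neg h, mul_zero]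
  rw [Finset.sum_congr rfl fun u _ => hsum u]
  rw [← Finset.sum_filter]
  -- step 6 : reindex multiples
  have hmq : m = p ^ s * p := by rw [hm, pow_succ]
  have hbij : ∑ u ∈ Finset.filter (fun u => p ∣ u) (Finset.range m),
        ((p : ℂ) * e (((c * (u:ℤ) ^ 2 : ℤ) : ℝ) / n))
      = ∑ w ∈ Finset.range (p ^ s), ((p:ℂ) * e (((c * ((p * w : ℕ):ℤ) ^ 2 : ℤ) : ℝ) / n)) := by
    apply Finset.sum_bij' (fun (u : ℕ) _ => u / p) (fun (w : ℕ) _ => p * w)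
    · intro u hu
      obtain ⟨hu1, hu2⟩ := Finset.mem_filter.mp hu
      refine Finset.mem_range.mpr ((Nat.div_lt_iff_lt_mul hp0).mpr ?_)
      rw [← hmq]; exact Finset.mem_range.mp hu1
    · intro w hw
      refine Finset.mem_filter.mpr ⟨Finset.mem_range.mpr ?_, Dvd.intro _ rfl⟩
      rw [hmq, mul_comm (p^s) p]
      exact (Nat.mul_lt_mul_left hp0).mpr (Finset.mem_range.mp hw)
    · intro u hu
      exact Nat.mul_div_cancel' (Finset.mem_filter.mp hu).2
    · intro w _
      exact Nat.mul_div_cancel_left w hp0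
    · intro u hu
      rw [Nat.mul_div_cancel' (Finset.mem_filter.mp hu).2]
  rw [hbij, Sr, Finset.mul_sum]
  apply Finset.sum_congr rfl
  intro w _
  have hpne : (p:ℝ) ≠ 0 := ne_of_gt hppos
  have harg : ((c * ((p * w : ℕ):ℤ) ^ 2 : ℤ) : ℝ) / (n:ℝ)
      = ((c * (w:ℤ) ^ 2 : ℤ) : ℝ) / ((p ^ s : ℕ):ℝ) := by
    rw [hn]
    push_cast
    rw [pow_add]
    have hps : ((p:ℝ))^s ≠ 0 := by positivity
    field_simp
  rw [harg]
noncomputable def qc (p : ℕ) [Fact p.Prime] : MulChar (ZMod p) ℂ :=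
  (quadraticChar (ZMod p)).ringHomComp (Int.castRingHom ℂ)

noncomputable def gp (p : ℕ) [Fact p.Prime] : ℂ :=
  gaussSum (qc p) (ZMod.stdAddChar (N := p))

lemma Sr_one (c : ℤ) : Sr 1 c = 1 := by
  rw [Sr, Finset.sum_range_one]
  norm_num
  exact e_zero

lemma qc_apply (p : ℕ) [Fact p.Prime] (x : ZMod p) :
    qc p x = ((quadraticChar (ZMod p) x : ℤ) : ℂ) := rfl

lemma Sr_prime (p : ℕ) [hp : Fact p.Prime] (hodd : Odd p) (c : ℤ) (hc : ¬ (p : ℤ) ∣ c) :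
    Sr p c = ((legendreSym p c : ℤ) : ℂ) * gp p := by
  have hp2 : p ≠ 2 := by rintro rfl; exact absurd hodd (by decide)
  have hchar : ringChar (ZMod p) ≠ 2 := by
    rw [ZMod.ringChar_zmod_n]; exact hp2
  have hc0 : (c : ZMod p) ≠ 0 := by
    rw [Ne, ZMod.intCast_zmod_eq_zero_iff_dvd]; exact hc
  set ψ := ZMod.stdAddChar (N := p) with hψ
  rw [Sr_eq_zmod_sum]
  -- fiberwise
  have fiber : ∑ x : ZMod p, ψ ((c : ZMod p) * x ^ 2)
      = ∑ y : ZMod p, (((quadraticChar (ZMod p) y : ℤ) : ℂ) + 1) * ψ ((c : ZMod p) * y) := by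
    rw [← Finset.sum_fiberwise Finset.univ (fun x : ZMod p => x ^ 2)
      (fun x => ψ ((c : ZMod p) * x ^ 2))]
    apply Finset.sum_congr rfl
    intro y _
    have hcongr : ∀ x ∈ Finset.univ.filter (fun x : ZMod p => x ^ 2 = y),
        ψ ((c : ZMod p) * x ^ 2) = ψ ((c : ZMod p) * y) := by
      intro x hx
      rw [(Finset.mem_filter.mp hx).2]
    rw [Finset.sum_congr rfl hcongr, Finset.sum_const, nsmul_eq_mul]
    congr 1
    have hcard := quadraticChar_card_sqrts hchar y
    rw [Set.toFinset_setOf] at hcard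
    have : ((Finset.univ.filter (fun x : ZMod p => x ^ 2 = y)).card : ℤ)
        = quadraticChar (ZMod p) y + 1 := hcard
    exact_mod_cast congrArg (Int.cast : ℤ → ℂ) this
  rw [fiber]
  simp only [add_mul, one_mul, Finset.sum_add_distrib]
  -- second sum vanishes
  have hzero : ∑ y : ZMod p, ψ ((c : ZMod p) * y) = 0 := by
    have h := AddChar.sum_mulShift (ψ := ψ) (c : ZMod p) (ZMod.isPrimitive_stdAddChar p)
    rw [if_neg hc0] at h
    have h2 : ∑ y : ZMod p, ψ ((c : ZMod p) * y) = ∑ y : ZMod p, ψ (y * (c : ZMod p)) :=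
      Finset.sum_congr rfl fun y _ => by rw [mul_comm]
    rw [h2]
    exact_mod_cast h
  rw [hzero, add_zero]
  -- first sum is a shifted Gauss sum
  have hfirst : ∑ y : ZMod p, ((quadraticChar (ZMod p) y : ℤ) : ℂ) * ψ ((c : ZMod p) * y)
      = gaussSum (qc p) (AddChar.mulShift ψ (c : ZMod p)) := by
    apply Finset.sum_congr rfl
    intro y _
    rw [AddChar.mulShift_apply, qc_apply]
  rw [hfirst]
  -- evaluate the shifted Gauss sum
  have hu : IsUnit (c : ZMod p) := Ne.isUnit hc0
  have hshift := gaussSum_mulShift (qc p) ψ hu.unit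
  have hcu : (hu.unit : ZMod p) = (c : ZMod p) := IsUnit.unit_spec hu
  rw [hcu] at hshift
  have hsq : qc p (c : ZMod p) * qc p (c : ZMod p) = 1 := by
    rw [qc_apply]
    have := quadraticChar_sq_one hc0
    have h2 : ((quadraticChar (ZMod p) (c : ZMod p) : ℤ) : ℂ) ^ 2 = 1 := by
      rw [← Int.cast_pow, this]; norm_num
    rw [← sq]; exact h2
  have : gaussSum (qc p) (AddChar.mulShift ψ (c : ZMod p))
      = qc p (c : ZMod p) * gaussSum (qc p) ψ := by
    calc gaussSum (qc p) (AddChar.mulShift ψ (c : ZMod p))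
        = (qc p (c : ZMod p) * qc p (c : ZMod p)) * gaussSum (qc p) (AddChar.mulShift ψ (c : ZMod p)) := by
          rw [hsq, one_mul]
      _ = qc p (c : ZMod p) * (qc p (c : ZMod p) * gaussSum (qc p) (AddChar.mulShift ψ (c : ZMod p))) := by ring
      _ = qc p (c : ZMod p) * gaussSum (qc p) ψ := by rw [hshift]
  rw [this, gp, hψ]
  congr 1
lemma gp_sq (p : ℕ) [hp : Fact p.Prime] (hodd : Odd p) :
    gp p ^ 2 = ((legendreSym p (-1) : ℤ) : ℂ) * p := by
  have hp2 : p ≠ 2 := by rintro rfl; exact absurd hodd (by decide)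
  have hchar : ringChar (ZMod p) ≠ 2 := by rw [ZMod.ringChar_zmod_n]; exact hp2
  have h1 : qc p ≠ 1 :=
    (MulChar.ringHomComp_ne_one_iff (RingHom.injective_int _)).mpr (quadraticChar_ne_one hchar)
  have h2 : (qc p).IsQuadratic := (quadraticChar_isQuadratic (ZMod p)).comp _
  have := gaussSum_sq h1 h2 (ZMod.isPrimitive_stdAddChar p)
  rw [gp, this, ZMod.card p]
  congr 1
  have : ((-1 : ℤ) : ZMod p) = (-1 : ZMod p) := by push_cast; ring
  rw [legendreSym, this, qc_apply]

lemma Sr_eval (p : ℕ) [hp : Fact p.Prime] (hodd : Odd p) (c : ℤ) (hc : ¬ (p : ℤ) ∣ c) (t : ℕ) :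
    Sr (p ^ t) c = if Even t then (p : ℂ) ^ (t / 2)
      else (p : ℂ) ^ ((t - 1) / 2) * (((legendreSym p c : ℤ) : ℂ) * gp p) := by
  induction t using Nat.strong_induction_on with
  | _ t ih =>
    match t with
    | 0 => simp [Sr_one]
    | 1 =>
      rw [pow_one, Sr_prime p hodd c hc]
      norm_num
    | (s + 2) =>
      rw [Sr_rec p hp.out hodd s c hc, ih s (by omega)]
      have heq : Even (s + 2) ↔ Even s := by
        constructor
        · intro h; rcases h with ⟨k, hk⟩; exact ⟨k - 1, by omega⟩
        · intro h; rcases h with ⟨k, hk⟩; exact ⟨k + 1, by omega⟩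
      by_cases hev : Even s
      · rw [if_pos hev, if_pos (heq.mpr hev)]
        have : (s + 2) / 2 = s / 2 + 1 := by omega
        rw [this, pow_succ]
        ring
      · rw [if_neg hev, if_neg (fun h => hev (heq.mp h))]
        have hs1 : s % 2 = 1 := Nat.odd_iff.mp (Nat.not_even_iff_odd.mp hev)
        have : (s + 2 - 1) / 2 = (s - 1) / 2 + 1 := by omega
        rw [this, pow_succ]
        ring
lemma units_sum (p : ℕ) [hp : Fact p.Prime] (hodd : Odd p) (t : ℕ) (ht : 1 ≤ t) (ℓ : ℕ) :
    ∑ a : (ZMod (p ^ t))ˣ, ((legendreSym p (((a : ZMod (p ^ t)).val : ℤ)) : ℤ) : ℂ) ^ ℓ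
      = if Even ℓ then ((p ^ t).totient : ℂ) else 0 := by
  haveI : NeZero (p ^ t) := ⟨pow_ne_zero t hp.out.pos.ne'⟩
  have hp2 : p ≠ 2 := by rintro rfl; exact absurd hodd (by decide)
  have hchar : ringChar (ZMod p) ≠ 2 := by rw [ZMod.ringChar_zmod_n]; exact hp2
  have hdvd : p ∣ p ^ t := dvd_pow_self p (by omega)
  have htwo : 2 ≤ p := hp.out.two_le
  -- each unit's value is not divisible by p
  have hnd : ∀ a : (ZMod (p ^ t))ˣ, ¬ (p : ℤ) ∣ ((a : ZMod (p ^ t)).val : ℤ) := by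
    intro a hdvd'
    have hcop := ZMod.val_coe_unit_coprime a
    have hpd : p ∣ (a : ZMod (p ^ t)).val := by exact_mod_cast hdvd'
    have h1 : p ∣ Nat.gcd ((a : ZMod (p ^ t)).val) (p ^ t) := Nat.dvd_gcd hpd hdvd
    rw [hcop] at h1
    have := Nat.le_of_dvd one_pos h1
    omega
  have hne0 : ∀ a : (ZMod (p ^ t))ˣ, (((a : ZMod (p ^ t)).val : ℤ) : ZMod p) ≠ 0 := by
    intro a
    rw [Ne, ZMod.intCast_zmod_eq_zero_iff_dvd]
    exact hnd a
  -- relation with the quadratic character through the cast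
  have hF : ∀ a : (ZMod (p ^ t))ˣ, ((legendreSym p (((a : ZMod (p ^ t)).val : ℤ)) : ℤ) : ℂ)
      = qc p (ZMod.castHom hdvd (ZMod p) (a : ZMod (p ^ t))) := by
    intro a
    rw [legendreSym, qc_apply]
    congr 2
    rw [Int.cast_natCast, ZMod.natCast_val, ZMod.castHom_apply]
  by_cases hev : Even ℓ
  · rw [if_pos hev]
    obtain ⟨k, hk⟩ := hev
    have hone : ∀ a : (ZMod (p ^ t))ˣ,
        ((legendreSym p (((a : ZMod (p ^ t)).val : ℤ)) : ℤ) : ℂ) ^ ℓ = 1 := by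
      intro a
      have hsq := legendreSym.sq_one p (hne0 a)
      have : ((legendreSym p (((a : ZMod (p ^ t)).val : ℤ)) : ℤ) : ℂ) ^ 2 = 1 := by
        exact_mod_cast congrArg (Int.cast : ℤ → ℂ) hsq
      calc ((legendreSym p (((a : ZMod (p ^ t)).val : ℤ)) : ℤ) : ℂ) ^ ℓ
          = (((legendreSym p (((a : ZMod (p ^ t)).val : ℤ)) : ℤ) : ℂ) ^ 2) ^ k := by
            rw [← pow_mul]; congr 1; omega
        _ = 1 := by rw [this, one_pow]
    rw [Finset.sum_congr rfl fun a _ => hone a, Finset.sum_const, nsmul_eq_mul, mul_one]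
    rw [← ZMod.card_units_eq_totient]
    simp
  · rw [if_neg hev]
    have hodd' : Odd ℓ := Nat.not_even_iff_odd.mp hev
    -- odd power of ±1 equals the value itself
    have hpow : ∀ a : (ZMod (p ^ t))ˣ,
        ((legendreSym p (((a : ZMod (p ^ t)).val : ℤ)) : ℤ) : ℂ) ^ ℓ
          = ((legendreSym p (((a : ZMod (p ^ t)).val : ℤ)) : ℤ) : ℂ) := by
      intro a
      rcases legendreSym.eq_one_or_neg_one p (hne0 a) with h | h
      · rw [h]; norm_num
      · rw [h]; push_cast; exact Odd.neg_one_pow hodd'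
    rw [Finset.sum_congr rfl fun a _ => hpow a]
    rw [Finset.sum_congr rfl fun a _ => hF a]
    -- shift by a unit with character value -1
    obtain ⟨b, hb⟩ := quadraticChar_exists_neg_one' hchar
    obtain ⟨u, hu⟩ := ZMod.unitsMap_surjective (m := p ^ t) hdvd b
    set G : (ZMod (p ^ t))ˣ → ℂ := fun a => qc p (ZMod.castHom hdvd (ZMod p) (a : ZMod (p ^ t)))
      with hG
    have hGu : G u = -1 := by
      have h1 : (ZMod.castHom hdvd (ZMod p) (u : ZMod (p ^ t))) = (b : ZMod p) := by
        rw [← hu, ZMod.unitsMap_def]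
        rfl
      show qc p (ZMod.castHom hdvd (ZMod p) (u : ZMod (p ^ t))) = -1
      rw [h1, qc_apply, hb]
      norm_num
    have hshift : ∑ a : (ZMod (p ^ t))ˣ, G a = ∑ a : (ZMod (p ^ t))ˣ, G (u * a) := by
      exact (Fintype.sum_bijective (fun a => u * a)
        (Group.mulLeft_bijective u) _ _ (fun a => rfl)).symm
    have hmul : ∀ a : (ZMod (p ^ t))ˣ, G (u * a) = G u * G a := by
      intro a
      rw [hG]
      simp only [Units.val_mul, map_mul]
    have : ∑ a : (ZMod (p ^ t))ˣ, G a = - ∑ a : (ZMod (p ^ t))ˣ, G a := by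
      nth_rewrite 1 [hshift]
      rw [Finset.sum_congr rfl fun a _ => hmul a, ← Finset.mul_sum, hGu]
      ring
    have hzero : ∑ a : (ZMod (p ^ t))ˣ, G a = 0 := by
      have h2 : (∑ a : (ZMod (p ^ t))ˣ, G a) + ∑ a : (ZMod (p ^ t))ˣ, G a = 0 := by
        nth_rewrite 2 [this]
        ring
      exact add_self_eq_zero.mp h2
    exact hzero
lemma legendreSym_pow (p : ℕ) [Fact p.Prime] (x : ℤ) (k : ℕ) :
    legendreSym p (x ^ k) = legendreSym p x ^ k := by
  induction k with
  | zero => simp [legendreSym.at_one]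
  | succ n ih => rw [pow_succ, legendreSym.mul, ih, pow_succ]

lemma totient_factor (p t : ℕ) [hp : Fact p.Prime] (ht : 1 ≤ t) :
    ((p : ℂ) ^ t)⁻¹ * (((p ^ t).totient : ℕ) : ℂ) = 1 - (p : ℂ)⁻¹ := by
  rw [Nat.totient_prime_pow hp.out (by omega)]
  have hpne : (p : ℂ) ≠ 0 := by
    exact_mod_cast hp.out.pos.ne'
  have hsplit : (p : ℂ) ^ t = (p : ℂ) ^ (t - 1) * p := by
    rw [← pow_succ]; congr 1; omega
  push_cast [Nat.cast_sub hp.out.one_le]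
  rw [hsplit]
  have hpow : ((p:ℂ) ^ (t-1)) ≠ 0 := pow_ne_zero _ hpne
  field_simp

theorem stmt6 (p : ℕ) [Fact p.Prime] (hodd : Odd p) (t : ℕ) (ht : 1 ≤ t)
    (ℓ : ℕ) (hℓ : 1 ≤ ℓ) (R D : ℤ) (hD : IsCoprime (p : ℤ) D)
    (hR : (p : ℤ) ^ t ∣ R) :
    ((p : ℂ) ^ t)⁻¹ * ∑ a : (ZMod (p ^ t))ˣ,
        e ((((a : ZMod (p ^ t)).val : ℤ) * R : ℤ) / (p ^ t : ℝ)) *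
          (∑ r : ZMod (p ^ t),
              e ((((a : ZMod (p ^ t)).val : ℤ) * (r.val : ℤ) ^ 2 : ℤ) / (p ^ t : ℝ))) ^ (ℓ - 1) *
          (∑ r : ZMod (p ^ t),
              e ((((a : ZMod (p ^ t)).val : ℤ) * D * (r.val : ℤ) ^ 2 : ℤ) / (p ^ t : ℝ))) =
      if Even t then (1 - (p : ℂ)⁻¹) * (((p : ℝ) ^ ((ℓ * t : ℝ) / 2) : ℝ) : ℂ)
      else if Odd ℓ then 0
      else (1 - (p : ℂ)⁻¹) * (((p : ℝ) ^ ((ℓ * t : ℝ) / 2) : ℝ) : ℂ) *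
        (legendreSym p ((-1) ^ (ℓ / 2) * D) : ℂ) := by
  have hp' : p.Prime := Fact.out
  haveI : NeZero (p ^ t) := ⟨pow_ne_zero t hp'.pos.ne'⟩
  have htwo : 2 ≤ p := hp'.two_le
  have hpne : (p : ℂ) ≠ 0 := by exact_mod_cast hp'.pos.ne'
  have hcast : ((p : ℝ)) ^ t = ((p ^ t : ℕ) : ℝ) := by push_cast; ring
  have hD' : ¬ (p : ℤ) ∣ D := by
    intro h
    have := hD.isUnit_of_dvd' dvd_rfl h
    rcases Int.isUnit_iff.mp this with h' | h' <;> omega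
  have hndvd : ∀ a : (ZMod (p ^ t))ˣ, ¬ (p : ℤ) ∣ ((a : ZMod (p ^ t)).val : ℤ) := by
    intro a hdvd'
    have hcop := ZMod.val_coe_unit_coprime a
    have hpd : p ∣ (a : ZMod (p ^ t)).val := by exact_mod_cast hdvd'
    have h1 : p ∣ Nat.gcd ((a : ZMod (p ^ t)).val) (p ^ t) :=
      Nat.dvd_gcd hpd (dvd_pow_self p (by omega))
    rw [hcop] at h1
    have := Nat.le_of_dvd one_pos h1
    omega
  have hndvd2 : ∀ a : (ZMod (p ^ t))ˣ, ¬ (p : ℤ) ∣ ((a : ZMod (p ^ t)).val : ℤ) * D := by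
    intro a h
    rcases (Int.prime_iff_natAbs_prime.mpr (by simpa using hp')).dvd_mul.mp h with h' | h'
    · exact hndvd a h'
    · exact hD' h'
  simp only [hcast]
  -- rewrite each factor
  have hfac1 : ∀ a : (ZMod (p ^ t))ˣ,
      e (((((a : ZMod (p ^ t)).val : ℤ) * R : ℤ) : ℝ) / ((p ^ t : ℕ) : ℝ)) = 1 := by
    intro a
    have hdv : ((p ^ t : ℕ) : ℤ) ∣ (((a : ZMod (p ^ t)).val : ℤ) * R - 0) := by
      rw [sub_zero]
      push_cast
      exact Dvd.dvd.mul_left hR _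
    have h0 := e_congr (n := p ^ t) (pow_pos hp'.pos t) hdv
    rw [h0]
    norm_num
    exact e_zero
  have hfac2 : ∀ a : (ZMod (p ^ t))ˣ,
      (∑ r : ZMod (p ^ t),
          e (((((a : ZMod (p ^ t)).val : ℤ) * ((r.val : ℤ)) ^ 2 : ℤ) : ℝ) / ((p ^ t : ℕ) : ℝ)))
        = Sr (p ^ t) ((a : ZMod (p ^ t)).val : ℤ) := by
    intro a
    rw [Sr]
    exact sum_range_eq_sum_zmod (p ^ t)
      (fun k => e (((((a : ZMod (p ^ t)).val : ℤ) * (k : ℤ) ^ 2 : ℤ) : ℝ) / ((p ^ t : ℕ) : ℝ)))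
  have hfac3 : ∀ a : (ZMod (p ^ t))ˣ,
      (∑ r : ZMod (p ^ t),
          e (((((a : ZMod (p ^ t)).val : ℤ) * D * ((r.val : ℤ)) ^ 2 : ℤ) : ℝ) / ((p ^ t : ℕ) : ℝ)))
        = Sr (p ^ t) (((a : ZMod (p ^ t)).val : ℤ) * D) := by
    intro a
    rw [Sr]
    exact sum_range_eq_sum_zmod (p ^ t)
      (fun k => e (((((a : ZMod (p ^ t)).val : ℤ) * D * (k : ℤ) ^ 2 : ℤ) : ℝ) / ((p ^ t : ℕ) : ℝ)))
  rw [Finset.sum_congr rfl fun a _ => by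
    rw [hfac1 a, hfac2 a, hfac3 a, one_mul,
      Sr_eval p hodd _ (hndvd a) t, Sr_eval p hodd _ (hndvd2 a) t]]
  by_cases hev : Even t
  · -- t even
    rw [if_pos hev]
    simp only [if_pos hev]
    have ht2 : t % 2 = 0 := Nat.even_iff.mp hev
    have hterm : ((p : ℂ) ^ (t / 2)) ^ (ℓ - 1) * ((p : ℂ) ^ (t / 2))
        = (p : ℂ) ^ (t / 2 * ℓ) := by
      rw [← pow_succ, ← pow_mul, show ℓ - 1 + 1 = ℓ from by omega]
    rw [Finset.sum_congr rfl fun a _ => hterm]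
    rw [Finset.sum_const, Finset.card_univ, ZMod.card_units_eq_totient, nsmul_eq_mul]
    have hr : (((p : ℝ) ^ ((ℓ * t : ℝ) / 2) : ℝ) : ℂ) = (p : ℂ) ^ (t / 2 * ℓ) := by
      have hh : t / 2 * ℓ * 2 = ℓ * t := by
        have h := Nat.div_mul_cancel (even_iff_two_dvd.mp hev)
        calc t / 2 * ℓ * 2 = t / 2 * 2 * ℓ := by ring
          _ = t * ℓ := by rw [h]
          _ = ℓ * t := by ring
      have h2t : ((ℓ : ℝ) * t) / 2 = ((t / 2 * ℓ : ℕ) : ℝ) := by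
        have := congrArg (Nat.cast : ℕ → ℝ) hh
        push_cast at this
        push_cast
        linarith
      rw [h2t, Real.rpow_natCast]
      push_cast
      ring
    rw [hr, ← mul_assoc, totient_factor p t ht]
  · -- t odd
    rw [if_neg hev]
    simp only [if_neg hev]
    have ht2 : t % 2 = 1 := Nat.odd_iff.mp (Nat.not_even_iff_odd.mp hev)
    set P : ℂ := (p : ℂ) ^ ((t - 1) / 2) with hP
    set g : ℂ := gp p with hg
    have hterm : ∀ a : (ZMod (p ^ t))ˣ,
        (P * (((legendreSym p ((a : ZMod (p ^ t)).val : ℤ) : ℤ) : ℂ) * g)) ^ (ℓ - 1) *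
          (P * (((legendreSym p (((a : ZMod (p ^ t)).val : ℤ) * D) : ℤ) : ℂ) * g))
        = (P ^ ℓ * g ^ ℓ * ((legendreSym p D : ℤ) : ℂ)) *
            ((legendreSym p ((a : ZMod (p ^ t)).val : ℤ) : ℤ) : ℂ) ^ ℓ := by
      intro a
      rw [legendreSym.mul]
      push_cast
      set L : ℂ := ((legendreSym p ((a : ZMod (p ^ t)).val : ℤ) : ℤ) : ℂ) with hL
      set LD : ℂ := ((legendreSym p D : ℤ) : ℂ) with hLD
      calc (P * (L * g)) ^ (ℓ - 1) * (P * (L * LD * g))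
          = ((P ^ (ℓ - 1) * P) * (L ^ (ℓ - 1) * L) * (g ^ (ℓ - 1) * g)) * LD := by
            rw [mul_pow, mul_pow]; ring
        _ = (P ^ ℓ * L ^ ℓ * g ^ ℓ) * LD := by
            rw [← pow_succ, ← pow_succ, ← pow_succ, show ℓ - 1 + 1 = ℓ from by omega]
        _ = (P ^ ℓ * g ^ ℓ * LD) * L ^ ℓ := by ring
    rw [Finset.sum_congr rfl fun a _ => hterm a, ← Finset.mul_sum,
      units_sum p hodd t ht ℓ]
    by_cases hel : Even ℓ
    · rw [if_neg (Nat.not_odd_iff_even.mpr hel), if_pos hel]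
      have hl2 : ℓ % 2 = 0 := Nat.even_iff.mp hel
      -- evaluate g ^ ℓ
      have hgl : g ^ ℓ = ((legendreSym p ((-1) ^ (ℓ / 2)) : ℤ) : ℂ) * (p : ℂ) ^ (ℓ / 2) := by
        have h1 : g ^ ℓ = (g ^ 2) ^ (ℓ / 2) := by
          rw [← pow_mul]; congr 1; omega
        rw [h1, hg, gp_sq p hodd, mul_pow, legendreSym_pow]
        push_cast
        ring
      rw [hgl]
      have hNpow : P ^ ℓ * (p : ℂ) ^ (ℓ / 2) = (p : ℂ) ^ (ℓ * t / 2) := by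
        rw [hP, ← pow_mul, ← pow_add]
        congr 1
        obtain ⟨m, hm⟩ := Nat.odd_iff.mpr ht2
        obtain ⟨k, hk⟩ := hel
        subst hm
        subst hk
        have h1 : (2 * m + 1 - 1) / 2 = m := by omega
        have h2 : (k + k) / 2 = k := by omega
        have h3 : (k + k) * (2 * m + 1) = 2 * (k * (2 * m + 1)) := by ring
        rw [h1, h2, h3, Nat.mul_div_cancel_left _ (by norm_num : 0 < 2)]
        ring
      have hr : (((p : ℝ) ^ ((ℓ * t : ℝ) / 2) : ℝ) : ℂ) = (p : ℂ) ^ (ℓ * t / 2) := by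
        have hh : ℓ * t / 2 * 2 = ℓ * t :=
          Nat.div_mul_cancel (Dvd.dvd.mul_right (even_iff_two_dvd.mp hel) t)
        have h2t : ((ℓ : ℝ) * t) / 2 = ((ℓ * t / 2 : ℕ) : ℝ) := by
          have := congrArg (Nat.cast : ℕ → ℝ) hh
          push_cast at this
          linarith
        rw [h2t, Real.rpow_natCast]
        push_cast
        ring
      have hls : ((legendreSym p ((-1) ^ (ℓ / 2) * D) : ℤ) : ℂ)
          = ((legendreSym p D : ℤ) : ℂ) * ((legendreSym p ((-1) ^ (ℓ / 2)) : ℤ) : ℂ) := by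
        rw [legendreSym.mul]
        push_cast
        ring
      rw [hr, hls]
      calc ((p : ℂ) ^ t)⁻¹ *
            (P ^ ℓ * (((legendreSym p ((-1) ^ (ℓ / 2)) : ℤ) : ℂ) * (p : ℂ) ^ (ℓ / 2)) *
              ((legendreSym p D : ℤ) : ℂ) * ((p ^ t).totient : ℂ))
          = (((p : ℂ) ^ t)⁻¹ * ((p ^ t).totient : ℂ)) * (P ^ ℓ * (p : ℂ) ^ (ℓ / 2)) *
              (((legendreSym p D : ℤ) : ℂ) * ((legendreSym p ((-1) ^ (ℓ / 2)) : ℤ) : ℂ)) := by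
            ring
        _ = _ := by
            rw [totient_factor p t ht, hNpow]
    · rw [if_pos (Nat.not_even_iff_odd.mp hel), if_neg hel]
      rw [mul_zero, mul_zero]
end

section
/- For every integer m ≥ 1 and ℓ ≥ 1, the sum 2^{-m} ∑_{b ∈ (ℤ/2^mℤ)^*} (∑_{h₀ mod 2^m} e(b h₀²/2^m)) (∑_{h₁,h₂ mod 2^m} e(b h₁ h₂/2^m))^ℓ equals 0 if m is odd, and equals 2^{(2ℓ+1)m/2 − 1} if m is even. -/
open Complex Finset

lemma e_nat (n : ℕ) : e n = 1 := by
  rw [e]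
  have : 2 * ↑Real.pi * Complex.I * (n:ℝ) = (n:ℤ) * (2 * ↑Real.pi * Complex.I) := by
    push_cast; ring
  rw [this, Complex.exp_int_mul_two_pi_mul_I]

lemma e_eq_one_iff_s11 (c N : ℕ) (hN : 0 < N) : e ((c : ℝ) / N) = 1 ↔ N ∣ c := by
  rw [e, Complex.exp_eq_one_iff]
  constructor
  · rintro ⟨n, hn⟩
    have hne : (2 * ↑Real.pi * Complex.I : ℂ) ≠ 0 := by
      simp [Real.pi_ne_zero, Complex.I_ne_zero, Complex.ofReal_ne_zero]
    have h2 : (((c : ℝ) / N : ℝ) : ℂ) = ((n : ℝ) : ℂ) := by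
      apply mul_left_cancel₀ hne
      rw [hn]; push_cast; ring
    have h3 : (c : ℝ) / N = (n : ℝ) := Complex.ofReal_inj.1 h2
    have h4 : (c : ℝ) = (n : ℝ) * N := by
      field_simp at h3; linarith [h3]
    have h5 : (c : ℤ) = n * N := by exact_mod_cast h4
    have : (N : ℤ) ∣ (c : ℤ) := ⟨n, by linarith [h5]⟩
    exact_mod_cast this
  · rintro ⟨k, rfl⟩
    refine ⟨k, ?_⟩
    have : ((N * k : ℕ) : ℝ) / N = (k : ℝ) := by rw [Nat.cast_mul]; exact mul_div_cancel_left₀ _ (Nat.cast_ne_zero.2 hN.ne')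
    rw [this]; push_cast; ring

lemma geom_e (c N : ℕ) (hN : 0 < N) :
    ∑ k ∈ range N, e ((c * k : ℕ) / (N : ℝ)) = if N ∣ c then (N : ℂ) else 0 := by
  have hterm : ∀ k : ℕ, e ((c * k : ℕ) / (N : ℝ)) = e ((c : ℝ)/N) ^ k := by
    intro k
    rw [e_pow]
    congr 1
    push_cast
    ring
  simp only [hterm]
  by_cases h : N ∣ c
  · rw [if_pos h]
    rw [(e_eq_one_iff_s11 c N hN).2 h]
    simp
  · rw [if_neg h]
    have hζ : e ((c:ℝ)/N) ≠ 1 := fun hh => h ((e_eq_one_iff_s11 c N hN).1 hh)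
    rw [geom_sum_eq hζ]
    have : e ((c:ℝ)/N) ^ N = 1 := by
      rw [e_pow]
      have : (N : ℝ) * ((c:ℝ)/N) = (c : ℕ) := by field_simp
      rw [this, e_nat]
    rw [this]
    simp

lemma sum_zmod_val {N : ℕ} [NeZero N] (f : ℕ → ℂ) :
    ∑ x : ZMod N, f x.val = ∑ k ∈ range N, f k := by
  refine Finset.sum_nbij' (fun x => x.val) (fun k => (k : ZMod N)) ?_ ?_ ?_ ?_ ?_
  · intro x _; exact mem_range.2 (ZMod.val_lt x)
  · intro k _; exact mem_univ _
  · intro x _; simp [ZMod.natCast_val, ZMod.cast_id]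
  · intro k hk; exact ZMod.val_cast_of_lt (mem_range.1 hk)
  · intro x _; rfl

lemma sum_units_val {m : ℕ} (hm : 1 ≤ m) (f : ℕ → ℂ) :
    ∑ b : (ZMod (2^m))ˣ, f (b : ZMod (2^m)).val
      = ∑ a ∈ (range (2^m)).filter (fun a => ¬ 2 ∣ a), f a := by
  have hN : NeZero (2^m) := ⟨by positivity⟩
  refine Finset.sum_nbij' (fun b => (b : ZMod (2^m)).val)
    (fun a => if h : Nat.Coprime a (2^m) then ZMod.unitOfCoprime a h else 1) ?_ ?_ ?_ ?_ ?_
  · intro b _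
    rw [mem_filter, mem_range]
    refine ⟨ZMod.val_lt _, fun h2 => ?_⟩
    have hc := ZMod.val_coe_unit_coprime b
    have : (2:ℕ) ∣ 1 := hc ▸ Nat.dvd_gcd h2 (dvd_pow_self 2 (by omega))
    omega
  · intro a _; exact mem_univ _
  · intro b _
    have hc := ZMod.val_coe_unit_coprime b
    rw [dif_pos hc]
    apply Units.ext
    rw [ZMod.coe_unitOfCoprime, ZMod.natCast_val, ZMod.cast_id]
  · intro a ha
    rw [mem_filter, mem_range] at ha
    have hc : Nat.Coprime a (2^m) := by
      apply Nat.Coprime.pow_right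
      exact Nat.coprime_two_right.2 (Nat.odd_iff.2 (by omega))
    rw [dif_pos hc]
    rw [show ((ZMod.unitOfCoprime a hc : (ZMod (2^m))ˣ) : ZMod (2^m)) = (a : ZMod (2^m)) from ZMod.coe_unitOfCoprime a hc]
    exact ZMod.val_cast_of_lt ha.1
  · intro b _; rfl

lemma sum_ite_dvd (m c : ℕ) (hc : c ≤ m) (z : ℂ) :
    ∑ k ∈ range (2^m), (if 2^c ∣ k then z else 0) = 2^(m-c) * z := by
  rw [← Finset.sum_filter]
  have him : (range (2^m)).filter (fun k => 2^c ∣ k)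
      = (range (2^(m-c))).image (fun j => 2^c * j) := by
    ext k
    simp only [mem_filter, mem_range, mem_image]
    constructor
    · rintro ⟨hk, j, rfl⟩
      refine ⟨j, ?_, rfl⟩
      have h2 : (2:ℕ)^m = 2^c * 2^(m-c) := by
        rw [← pow_add]; congr 1; omega
      rw [h2] at hk
      exact lt_of_mul_lt_mul_left hk (Nat.zero_le _)
    · rintro ⟨j, hj, rfl⟩
      refine ⟨?_, ⟨j, rfl⟩⟩
      have h2 : (2:ℕ)^m = 2^c * 2^(m-c) := by
        rw [← pow_add]; congr 1; omega
      rw [h2]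
      exact (Nat.mul_lt_mul_left (Nat.pow_pos (by norm_num) : 0 < 2^c)).2 hj
  rw [him, Finset.sum_image (by intro a _ b _ h; exact Nat.eq_of_mul_eq_mul_left (by positivity) h)]
  simp [mul_comm]

lemma pow_dvd_sq_iff (m k : ℕ) : 2^m ∣ k^2 ↔ 2^((m+1)/2) ∣ k := by
  constructor
  · intro h
    rcases eq_or_ne k 0 with rfl | hk
    · exact dvd_zero _
    have hk2 : k^2 ≠ 0 := pow_ne_zero _ hk
    have h1 : m ≤ (k^2).factorization 2 :=
      (Nat.Prime.pow_dvd_iff_le_factorization Nat.prime_two hk2).1 h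
    rw [Nat.factorization_pow] at h1
    simp only [Finsupp.smul_apply, smul_eq_mul] at h1
    exact (Nat.Prime.pow_dvd_iff_le_factorization Nat.prime_two hk).2 (by omega)
  · rintro ⟨j, rfl⟩
    have : (2^((m+1)/2) * j)^2 = 2^(2*((m+1)/2)) * j^2 := by ring
    rw [this]
    exact Dvd.dvd.mul_right (pow_dvd_pow 2 (by omega)) _

lemma units_gauss_sum (m : ℕ) (hm : 1 ≤ m) :
    ∑ b : (ZMod (2^m))ˣ, ∑ h₀ : ZMod (2^m),
        e (((b : ZMod (2^m)).val * h₀.val^2 : ℕ) / ((2:ℝ)^m)) =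
      (2:ℂ)^(2*m - (m+1)/2) - 2^(2*m - 1 - m/2) := by
  have hN : NeZero (2^m) := ⟨by positivity⟩
  have hNpos : 0 < 2^m := by positivity
  rw [sum_units_val hm (fun a => ∑ h₀ : ZMod (2^m), e ((a * h₀.val^2 : ℕ) / ((2:ℝ)^m)))]
  have hsplit := Finset.sum_filter_add_sum_filter_not (range (2^m)) (fun a => ¬ 2 ∣ a)
    (fun a => ∑ h₀ : ZMod (2^m), e ((a * h₀.val^2 : ℕ) / ((2:ℝ)^m)))
  -- total sum
  have htot : ∑ a ∈ range (2^m), ∑ h₀ : ZMod (2^m), e ((a * h₀.val^2 : ℕ) / ((2:ℝ)^m))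
      = (2:ℂ)^(2*m - (m+1)/2) := by
    rw [Finset.sum_comm]
    have : ∀ h₀ : ZMod (2^m),
        ∑ a ∈ range (2^m), e ((a * h₀.val^2 : ℕ) / ((2:ℝ)^m))
          = if 2^m ∣ h₀.val^2 then ((2:ℂ)^m) else 0 := by
      intro h₀
      have h1 := geom_e (h₀.val^2) (2^m) hNpos
      push_cast at h1
      rw [← h1]
      apply Finset.sum_congr rfl
      intro a _
      congr 1
      push_cast
      ring
    simp only [this]
    have h2 : ∀ h₀ : ZMod (2^m), (if 2^m ∣ h₀.val^2 then ((2:ℂ)^m) else 0)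
        = (fun v => if 2^((m+1)/2) ∣ v then ((2:ℂ)^m) else 0) h₀.val := by
      intro h₀
      simp only [pow_dvd_sq_iff]
    simp only [h2]
    rw [sum_zmod_val (fun v => if 2^((m+1)/2) ∣ v then ((2:ℂ)^m) else 0)]
    rw [sum_ite_dvd m ((m+1)/2) (by omega) ((2:ℂ)^m)]
    rw [← pow_add]
    congr 1
    omega
  -- even sum
  have heven : ∑ a ∈ (range (2^m)).filter (fun a => ¬¬ 2 ∣ a),
      ∑ h₀ : ZMod (2^m), e ((a * h₀.val^2 : ℕ) / ((2:ℝ)^m))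
      = (2:ℂ)^(2*m - 1 - m/2) := by
    have hpow : (2:ℕ)^m = 2 * 2^(m-1) := by
      rw [← pow_succ']; congr 1; omega
    have hstep : ∑ a ∈ (range (2^m)).filter (fun a => ¬¬ 2 ∣ a),
        ∑ h₀ : ZMod (2^m), e ((a * h₀.val^2 : ℕ) / ((2:ℝ)^m))
        = ∑ t ∈ range (2^(m-1)), ∑ h₀ : ZMod (2^m), e ((2 * t * h₀.val^2 : ℕ) / ((2:ℝ)^m)) := by
      refine Finset.sum_nbij' (fun a => a / 2) (fun t => 2 * t) ?_ ?_ ?_ ?_ ?_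
      · intro a ha
        simp only [mem_filter, mem_range, not_not] at ha
        simp only [mem_range]
        omega
      · intro t ht
        simp only [mem_range] at ht
        simp only [mem_filter, mem_range, not_not]
        exact ⟨by omega, ⟨t, rfl⟩⟩
      · intro a ha
        simp only [mem_filter, mem_range, not_not] at ha
        omega
      · intro t _
        omega
      · intro a ha
        simp only [mem_filter, mem_range, not_not] at ha
        obtain ⟨-, k, rfl⟩ := ha
        rw [Nat.mul_div_cancel_left k (by norm_num)]
    rw [hstep]
    rw [Finset.sum_comm]
    have hMpos : 0 < 2^(m-1) := by positivity
    have h1 : ∀ h₀ : ZMod (2^m),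
        ∑ t ∈ range (2^(m-1)), e ((2 * t * h₀.val^2 : ℕ) / ((2:ℝ)^m))
          = if 2^(m-1) ∣ h₀.val^2 then ((2:ℂ)^(m-1)) else 0 := by
      intro h₀
      have hg := geom_e (h₀.val^2) (2^(m-1)) hMpos
      push_cast at hg
      rw [← hg]
      apply Finset.sum_congr rfl
      intro t _
      congr 1
      push_cast
      rw [show ((2:ℝ)^m) = 2 * 2^(m-1) by exact_mod_cast congrArg (Nat.cast : ℕ → ℝ) hpow]
      field_simp
    simp only [h1]
    have h2 : ∀ h₀ : ZMod (2^m), (if 2^(m-1) ∣ h₀.val^2 then ((2:ℂ)^(m-1)) else 0)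
        = (fun v => if 2^(m/2) ∣ v then ((2:ℂ)^(m-1)) else 0) h₀.val := by
      intro h₀
      simp only []
      have h3 : (2:ℕ)^(((m-1)+1)/2) = 2^(m/2) := by congr 1; omega
      simp only [pow_dvd_sq_iff, h3]
    simp only [h2]
    rw [sum_zmod_val (fun v => if 2^(m/2) ∣ v then ((2:ℂ)^(m-1)) else 0)]
    rw [sum_ite_dvd m (m/2) (by omega) ((2:ℂ)^(m-1))]
    rw [← pow_add]
    congr 1
    omega
  rw [htot, heven] at hsplit
  linear_combination hsplit

lemma inner_double (m : ℕ) (hm : 1 ≤ m) (b : (ZMod (2^m))ˣ) :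
    ∑ h₁ : ZMod (2^m), ∑ h₂ : ZMod (2^m),
      e (((b : ZMod (2^m)).val * h₁.val * h₂.val : ℕ) / ((2:ℝ)^m)) = (2:ℂ)^m := by
  have hN : NeZero (2^m) := ⟨by positivity⟩
  have hNpos : 0 < 2^m := by positivity
  have h1 : ∀ h₁ : ZMod (2^m),
      ∑ h₂ : ZMod (2^m), e (((b : ZMod (2^m)).val * h₁.val * h₂.val : ℕ) / ((2:ℝ)^m))
        = if h₁ = 0 then ((2:ℂ)^m) else 0 := by
    intro h₁
    rw [sum_zmod_val (fun v => e ((((b : ZMod (2^m)).val * h₁.val * v : ℕ)) / ((2:ℝ)^m)))]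
    have hg := geom_e ((b : ZMod (2^m)).val * h₁.val) (2^m) hNpos
    push_cast at hg
    push_cast
    rw [hg]
    have hcop : Nat.Coprime (2^m) (b : ZMod (2^m)).val :=
      (ZMod.val_coe_unit_coprime b).symm
    have hiff : 2^m ∣ (b : ZMod (2^m)).val * h₁.val ↔ h₁ = 0 := by
      constructor
      · intro hd
        have hdv := hcop.dvd_of_dvd_mul_left hd
        have hlt := ZMod.val_lt h₁
        exact (ZMod.val_eq_zero h₁).1 (Nat.eq_zero_of_dvd_of_lt hdv hlt)
      · rintro rfl
        simp
    rw [if_congr hiff rfl rfl]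
  simp only [h1]
  simp

theorem stmt11 (m ℓ : ℕ) (hm : 1 ≤ m) (hℓ : 1 ≤ ℓ) :
    (Odd m →
      ((2 : ℂ) ^ m)⁻¹ * ∑ b : (ZMod (2 ^ m))ˣ,
          (∑ h₀ : ZMod (2 ^ m),
              e ((((b : ZMod (2 ^ m)).val * h₀.val ^ 2 : ℕ)) / (2 ^ m : ℝ))) *
            (∑ h₁ : ZMod (2 ^ m), ∑ h₂ : ZMod (2 ^ m),
                e ((((b : ZMod (2 ^ m)).val * h₁.val * h₂.val : ℕ)) / (2 ^ m : ℝ))) ^ ℓ = 0) ∧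
    (Even m →
      ((2 : ℂ) ^ m)⁻¹ * ∑ b : (ZMod (2 ^ m))ˣ,
          (∑ h₀ : ZMod (2 ^ m),
              e ((((b : ZMod (2 ^ m)).val * h₀.val ^ 2 : ℕ)) / (2 ^ m : ℝ))) *
            (∑ h₁ : ZMod (2 ^ m), ∑ h₂ : ZMod (2 ^ m),
                e ((((b : ZMod (2 ^ m)).val * h₁.val * h₂.val : ℕ)) / (2 ^ m : ℝ))) ^ ℓ =
        (2 : ℂ) ^ (((2 * ℓ + 1) * m) / 2 - 1)) := by
  have hkey : ∑ b : (ZMod (2 ^ m))ˣ,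
          (∑ h₀ : ZMod (2 ^ m),
              e ((((b : ZMod (2 ^ m)).val * h₀.val ^ 2 : ℕ)) / (2 ^ m : ℝ))) *
            (∑ h₁ : ZMod (2 ^ m), ∑ h₂ : ZMod (2 ^ m),
                e ((((b : ZMod (2 ^ m)).val * h₁.val * h₂.val : ℕ)) / (2 ^ m : ℝ))) ^ ℓ
      = ((2:ℂ)^(2*m - (m+1)/2) - 2^(2*m - 1 - m/2)) * ((2:ℂ)^m)^ℓ := by
    rw [← units_gauss_sum m hm, Finset.sum_mul]
    apply Finset.sum_congr rfl
    intro b _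
    rw [inner_double m hm b]
  constructor
  · intro hodd
    rw [hkey]
    obtain ⟨r, hr⟩ := hodd
    rw [show 2*m - (m+1)/2 = 2*m - 1 - m/2 by omega]
    simp
  · intro heven
    rw [hkey]
    obtain ⟨r, hr⟩ := heven
    have h2ne : ((2:ℂ)^m) ≠ 0 := pow_ne_zero _ two_ne_zero
    rw [show 2*m - (m+1)/2 = (2*m - 1 - m/2) + 1 by omega, pow_succ]
    rw [show (2:ℂ)^(2*m-1-m/2) * 2 - 2^(2*m-1-m/2) = 2^(2*m-1-m/2) by ring]
    rw [inv_mul_eq_iff_eq_mul₀ h2ne, ← pow_mul, ← pow_add, ← pow_add]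
    congr 1
    subst hr
    rw [show (2*ℓ+1)*(r+r) = 2*(2*(r*ℓ) + r) by ring,
        show (r+r)*ℓ = 2*(r*ℓ) by ring]
    generalize r*ℓ = p
    omega
end

section
/- For the quadratic form Q_{FT} = k₁k₂ + k₃k₄ + ... + k_{2ℓ−1}k_{2ℓ} in 2ℓ variables, the Dirichlet series L(s, Q_{FT}) = ∑_{q≥1} S_{Q_{FT}}(q) q^{-s} (where S_F(q) = q^{-1}∑_{a ∈ (ℤ/q)^*}∑_{h ∈ (ℤ/q)^{2ℓ}} e(aF(h)/q)) equals ζ(s − ℓ)/ζ(s + 1 − ℓ) for all real s > 2ℓ. -/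
/-!
For a unit `a` modulo `q`, summing `e(a u·v / q)` over `v` gives `q^ℓ` if `u = 0` and `0`
otherwise, so the exponential sum is `φ(q) q^ℓ` and the Dirichlet series is
`∑ φ(q) q^{-(s + 1 - ℓ)}`. Since `1 ⍟ φ = id`, the latter is `ζ(s - ℓ) / ζ(s + 1 - ℓ)`.
-/

open Complex Finset

open scoped LSeries.notation

lemma one_convolution_totient :
    (1 : ℕ → ℂ) ⍟ (fun n ↦ (n.totient : ℂ)) = fun n : ℕ ↦ (n : ℂ) := by
  funext n
  rcases eq_or_ne n 0 with rfl | hn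
  · simp
  · simp only [LSeries.convolution_def, Pi.one_apply, one_mul]
    rw [Nat.sum_divisorsAntidiagonal' (f := fun _ d ↦ (d.totient : ℂ)), ← Nat.cast_sum,
      Nat.sum_totient]

lemma LSeriesSummable_totient {z : ℂ} (hz : 2 < z.re) :
    LSeriesSummable (fun n ↦ (n.totient : ℂ)) z := by
  refine LSeriesSummable_of_le_const_mul_rpow hz ⟨1, fun n _ ↦ ?_⟩
  rw [norm_natCast, one_mul, show (2 : ℝ) - 1 = 1 by norm_num, Real.rpow_one]
  exact_mod_cast n.totient_le

lemma LSeries_natCast {z : ℂ} : L (fun n : ℕ ↦ (n : ℂ)) z = L 1 (z - 1) := by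
  refine tsum_congr fun n ↦ ?_
  rcases eq_or_ne n 0 with rfl | hn
  · simp
  · have hn' : (n : ℂ) ≠ 0 := Nat.cast_ne_zero.mpr hn
    rw [LSeries.term_of_ne_zero hn, LSeries.term_of_ne_zero hn, Pi.one_apply,
      cpow_sub _ _ hn', cpow_one, one_div_div]

lemma LSeries_totient {z : ℂ} (hz : 2 < z.re) :
    L (fun n ↦ (n.totient : ℂ)) z = riemannZeta (z - 1) / riemannZeta z := by
  have hz₁ : 1 < z.re := by linarith
  have hconv := LSeries_convolution' (LSeriesSummable_one_iff.mpr hz₁) (LSeriesSummable_totient hz)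
  rw [one_convolution_totient, LSeries_natCast, LSeries_one_eq_riemannZeta hz₁,
    LSeries_one_eq_riemannZeta (by rw [sub_re, one_re]; linarith)] at hconv
  rw [hconv, mul_div_cancel_left₀ _ (riemannZeta_ne_zero_of_one_lt_re hz₁)]

namespace AddChar

variable {R R' : Type*} [CommRing R] [CommRing R']

lemma map_sum_eq_prod {A M : Type*} [AddCommMonoid A] [CommMonoid M] (ψ : AddChar A M)
    {ι : Type*} (s : Finset ι) (f : ι → A) : ψ (∑ i ∈ s, f i) = ∏ i ∈ s, ψ (f i) :=
  map_prod ψ.toMonoidHom (fun i ↦ Multiplicative.ofAdd (f i)) s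

lemma IsPrimitive.mulShift {ψ : AddChar R R'} (hψ : ψ.IsPrimitive) {c : R} (hc : IsUnit c) :
    (ψ.mulShift c).IsPrimitive := fun b hb ↦ by
  rw [mulShift_mulShift]
  exact hψ (hc.mul_right_eq_zero.not.mpr hb)

theorem sum_sum_dotProduct [Fintype R] [DecidableEq R] [IsDomain R'] {ι : Type*} [Fintype ι]
    [DecidableEq ι] {ψ : AddChar R R'} (hψ : ψ.IsPrimitive) :
    ∑ u : ι → R, ∑ v : ι → R, ψ (u ⬝ᵥ v) = (Fintype.card R : R') ^ Fintype.card ι := by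
  calc ∑ u : ι → R, ∑ v : ι → R, ψ (u ⬝ᵥ v)
      = ∑ u : ι → R, ∏ i, ∑ x : R, ψ (x * u i) := by
        refine sum_congr rfl fun u _ ↦ ?_
        simp only [dotProduct, map_sum_eq_prod, prod_univ_sum, Fintype.piFinset_univ, mul_comm]
    _ = ∏ i : ι, ∑ x : R, if x = 0 then (Fintype.card R : R') else 0 := by
        simp only [sum_mulShift _ hψ, Nat.cast_ite, Nat.cast_zero, prod_univ_sum,
          Fintype.piFinset_univ]
    _ = (Fintype.card R : R') ^ Fintype.card ι := by simp

end AddChar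

lemma e_intCast_div (n : ℕ) [NeZero n] (m : ℤ) :
    e (m / n) = ZMod.stdAddChar (m : ZMod n) := by
  rw [ZMod.stdAddChar_coe, e]
  push_cast
  ring_nf

lemma sum_units_sum_sum_e_dotProduct (ℓ n : ℕ) [NeZero n] :
    ∑ a : (ZMod n)ˣ, ∑ u : Fin ℓ → ZMod n, ∑ v : Fin ℓ → ZMod n,
        e ((((a : ZMod n).val : ℤ) * (∑ i, ((u i).val : ℤ) * ((v i).val : ℤ)) : ℤ) / n) =
      n.totient * (n : ℂ) ^ ℓ := by
  have hψ (a : (ZMod n)ˣ) := (ZMod.isPrimitive_stdAddChar n).mulShift a.isUnit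
  calc _ = ∑ a : (ZMod n)ˣ, ∑ u : Fin ℓ → ZMod n, ∑ v : Fin ℓ → ZMod n,
        (ZMod.stdAddChar.mulShift (a : ZMod n)) (u ⬝ᵥ v) := by
        simp only [e_intCast_div, AddChar.mulShift_apply, dotProduct]
        push_cast [ZMod.natCast_val, ZMod.cast_id', id]
        rfl
    _ = n.totient * (n : ℂ) ^ ℓ := by
        rw [sum_congr rfl fun a _ ↦ AddChar.sum_sum_dotProduct (hψ a), sum_const, card_univ,
          ZMod.card_units_eq_totient, ZMod.card, Fintype.card_fin, nsmul_eq_mul]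

lemma inv_mul_totient_mul_pow_mul_rpow_eq_term (ℓ : ℕ) (s : ℝ) {n : ℕ} (hn : n ≠ 0) :
    (n : ℂ)⁻¹ * (n.totient * (n : ℂ) ^ ℓ) * (((n : ℝ) ^ (-s) : ℝ) : ℂ) =
      LSeries.term (fun n ↦ (n.totient : ℂ)) (s + 1 - ℓ) n := by
  have hn' : (n : ℂ) ≠ 0 := Nat.cast_ne_zero.mpr hn
  rw [LSeries.term_of_ne_zero hn, ofReal_cpow n.cast_nonneg, ofReal_natCast, ofReal_neg,
    cpow_sub _ _ hn', cpow_add _ _ hn', cpow_one, cpow_neg, cpow_natCast]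
  field_simp

theorem stmt16 (ℓ : ℕ) (hℓ : 1 ≤ ℓ) (s : ℝ) (hs : (2 * ℓ : ℝ) < s) :
    ∑' q : ℕ,
        (((q + 1 : ℕ) : ℂ)⁻¹ *
          ∑ a : (ZMod (q + 1))ˣ, ∑ u : Fin ℓ → ZMod (q + 1), ∑ v : Fin ℓ → ZMod (q + 1),
            e ((((a : ZMod (q + 1)).val : ℤ) *
                (∑ i : Fin ℓ, ((u i).val : ℤ) * ((v i).val : ℤ)) : ℤ) / ((q + 1 : ℕ) : ℝ))) *
          ((((q + 1 : ℕ) : ℝ) ^ (-s) : ℝ) : ℂ) =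
      riemannZeta ((s : ℂ) - (ℓ : ℂ)) / riemannZeta ((s : ℂ) + 1 - (ℓ : ℂ)) := by
  set z : ℂ := s + 1 - ℓ
  have hz : 2 < z.re := by
    have : (1 : ℝ) ≤ ℓ := by exact_mod_cast hℓ
    simp only [z, sub_re, add_re, ofReal_re, one_re, natCast_re]
    linarith
  rw [show (s : ℂ) - ℓ = z - 1 by ring, ← LSeries_totient hz, LSeries,
    (LSeriesSummable_totient hz).tsum_eq_zero_add, LSeries.term_zero, zero_add]
  refine tsum_congr fun q ↦ ?_
  rw [sum_units_sum_sum_e_dotProduct, inv_mul_totient_mul_pow_mul_rpow_eq_term ℓ s q.succ_ne_zero]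
end
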